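/- arXiv:1409.0837 — 5 statements merged into one kernel-verified Lean document; each statement's English description precedes it below -/
import Mathlib

section
/- For n ≥ 2, the commutative square of simplicial sets with corners N(Λ^0), N(Λ^{n-1}), N(Λ^1), N(Λ^n) — where N(Λ^{n-1}) → N(Λ^n) is induced by the inert inclusion [n−1] → [n] hitting {0,...,n−1}, N(Λ^1) → N(Λ^n) is induced by the inert inclusion [1] → [n] hitting {n−1,n}, and both maps out of N(Λ^0) = Δ^0 pick out the vertex (n−1,n−1) — is a pushout square in the category of simplicial sets. -/
open CategoryTheory Limits

/-- The poset `Λ^k`: pairs `(i,j)` with `0 ≤ i ≤ j ≤ k` and `j − i ≤ 1`, ordered by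
`(i,j) ≤ (i',j')` iff `i ≤ i'` and `j' ≤ j`. -/
def LambdaP (k : ℕ) : Type :=
  {p : Fin (k+1) × Fin (k+1) // p.1 ≤ p.2 ∧ (p.2 : ℕ) ≤ (p.1 : ℕ) + 1}

instance (k : ℕ) : PartialOrder (LambdaP k) where
  le p q := p.1.1 ≤ q.1.1 ∧ q.1.2 ≤ p.1.2
  le_refl p := ⟨le_refl _, le_refl _⟩
  le_trans p q r h h' := ⟨h.1.trans h'.1, h'.2.trans h.2⟩
  le_antisymm p q h h' :=
    Subtype.ext (Prod.ext (le_antisymm h.1 h'.1) (le_antisymm h'.2 h.2))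

/-- We write `n = m + 2` for the hypothesis `n ≥ 2`.
The map `Λ^{n-1} → Λ^n` induced by the inert inclusion `[n−1] → [n]` hitting
`{0, ..., n−1}`. -/
def lambdaIncl₁ (m : ℕ) (p : LambdaP (m+1)) : LambdaP (m+2) :=
  ⟨(⟨(p.1.1 : ℕ), by have := p.1.1.isLt; omega⟩, ⟨(p.1.2 : ℕ), by have := p.1.2.isLt; omega⟩),
    ⟨Fin.mk_le_mk.mpr p.2.1, p.2.2⟩⟩

lemma lambdaIncl₁_monotone (m : ℕ) : Monotone (lambdaIncl₁ m) := by
  intro p q h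
  exact ⟨Fin.mk_le_mk.mpr h.1, Fin.mk_le_mk.mpr h.2⟩

/-- The map `Λ^1 → Λ^n` induced by the inert inclusion `[1] → [n]` hitting
`{n−1, n}`, i.e. `i ↦ (n−1) + i`. -/
def lambdaIncl₂ (m : ℕ) (p : LambdaP 1) : LambdaP (m+2) :=
  ⟨(⟨m + 1 + (p.1.1 : ℕ), by have := p.1.1.isLt; omega⟩,
    ⟨m + 1 + (p.1.2 : ℕ), by have := p.1.2.isLt; omega⟩),
    ⟨Fin.mk_le_mk.mpr (Nat.add_le_add_left p.2.1 (m+1)),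
      by have h := p.2.2; simp only [Fin.mk_le_mk]; omega⟩⟩

lemma lambdaIncl₂_monotone (m : ℕ) : Monotone (lambdaIncl₂ m) := by
  intro p q h
  exact ⟨Fin.mk_le_mk.mpr (Nat.add_le_add_left h.1 (m+1)),
    Fin.mk_le_mk.mpr (Nat.add_le_add_left h.2 (m+1))⟩

/-- The map `Λ^0 → Λ^{n-1}` picking out the vertex `(n−1, n−1)`. -/
def lambdaVert₁ (m : ℕ) (_ : LambdaP 0) : LambdaP (m+1) :=
  ⟨(Fin.last (m+1), Fin.last (m+1)), ⟨le_refl _, by simp⟩⟩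

/-- The map `Λ^0 → Λ^1` picking out the vertex `(0, 0)` (which is sent to
`(n−1, n−1)` by the inclusion `Λ^1 → Λ^n`). -/
def lambdaVert₂ (_ : LambdaP 0) : LambdaP 1 :=
  ⟨(⟨0, by omega⟩, ⟨0, by omega⟩), ⟨le_refl _, by simp⟩⟩

/-- The functors of posets, regarded as morphisms in `Cat`. -/
lemma lambdaVert₁_monotone (m : ℕ) : Monotone (lambdaVert₁ m) := fun _ _ _ => le_refl _

lemma lambdaVert₂_monotone : Monotone lambdaVert₂ := fun _ _ _ => le_refl _

def vertFunctor₁ (m : ℕ) : Cat.of (LambdaP 0) ⟶ Cat.of (LambdaP (m+1)) :=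
  ((lambdaVert₁_monotone m).functor).toCatHom

def vertFunctor₂ (m : ℕ) : Cat.of (LambdaP 0) ⟶ Cat.of (LambdaP 1) :=
  (lambdaVert₂_monotone.functor).toCatHom

def inclFunctor₁ (m : ℕ) : Cat.of (LambdaP (m+1)) ⟶ Cat.of (LambdaP (m+2)) :=
  ((lambdaIncl₁_monotone m).functor).toCatHom

def inclFunctor₂ (m : ℕ) : Cat.of (LambdaP 1) ⟶ Cat.of (LambdaP (m+2)) :=
  ((lambdaIncl₂_monotone m).functor).toCatHom

/-!
A chain in `Λ^n` that contains an element `(n-1, n)` or `(n, n)` has all its first coordinates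
`≥ n - 1`, so every simplex of `N(Λ^n)` lies in `N(Λ^{n-1})` or in `N(Λ^1)`; the two sub-posets meet
only in the vertex `(n-1, n-1)`. Since pushouts of simplicial sets are computed levelwise, it
remains to note that a square of sets whose maps into the corner are injective, jointly surjective
and whose images meet exactly in the image of `Δ^0` is a pushout.
-/

universe u

lemma Preorder.nerve_ext {X : Type u} [Preorder X] {Δ : SimplexCategoryᵒᵖ}
    {s s' : (nerve X).obj Δ} (h : ∀ i, s.obj i = s'.obj i) : s = s' :=
  CategoryTheory.Functor.ext h fun _ _ _ => Subsingleton.elim _ _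

namespace OrderEmbedding

def ofSubsingleton {α β : Type*} [PartialOrder α] [Preorder β] [Subsingleton α] (f : α → β) :
    α ↪o β :=
  .ofMapLEIff f fun a b => by simp only [Subsingleton.elim a b, le_refl]

variable {P Q : Type u} [PartialOrder P] [PartialOrder Q] (f : P ↪o Q)

lemma nerveMap_app_injective (Δ : SimplexCategoryᵒᵖ) :
    Function.Injective ((nerveFunctor.map f.monotone.functor.toCatHom).app Δ) :=
  fun _ _ h => Preorder.nerve_ext (X := P) fun i => f.injective congr(($h).obj i)

lemma mem_range_nerveMap_app {Δ : SimplexCategoryᵒᵖ} (s : (nerve Q).obj Δ)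
    (hs : ∀ i, s.obj i ∈ Set.range f) :
    s ∈ Set.range ((nerveFunctor.map f.monotone.functor.toCatHom).app Δ) := by
  choose g hg using hs
  have hg_mono : Monotone g := fun i j hij =>
    f.le_iff_le.mp (by simpa only [hg] using s.monotone hij)
  exact ⟨hg_mono.functor, Preorder.nerve_ext (X := Q) hg⟩

end OrderEmbedding

theorem nerve_isPushout_of_isChain {A B C D : Type u} [PartialOrder A] [PartialOrder B]
    [PartialOrder C] [PartialOrder D] (t : A ↪o B) (l : A ↪o C) (r : B ↪o D) (b : C ↪o D)
    (w : ∀ a, r (t a) = b (l a)) (h_inter : ∀ x y, r x = b y → x ∈ Set.range t)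
    (h_chain : ∀ S : Set D, IsChain (· ≤ ·) S → S ⊆ Set.range r ∨ S ⊆ Set.range b) :
    IsPushout (nerveFunctor.map t.monotone.functor.toCatHom)
      (nerveFunctor.map l.monotone.functor.toCatHom)
      (nerveFunctor.map r.monotone.functor.toCatHom)
      (nerveFunctor.map b.monotone.functor.toCatHom) := by
  refine IsPushout.of_forall_isPushout_app fun Δ => ?_
  have : Mono ((nerveFunctor.map r.monotone.functor.toCatHom).app Δ) :=
    (mono_iff_injective _).2 (r.nerveMap_app_injective Δ)
  refine Types.isPushout_of_isPullback_of_mono' ?_ ?_ fun _ _ _ _ h => b.nerveMap_app_injective Δ h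
  · rw [Types.isPullback_iff]
    refine ⟨?_, fun x y h => t.nerveMap_app_injective Δ h.1, fun x y h => ?_⟩
    · ext x
      exact Preorder.nerve_ext (X := D) fun i => w (x.obj i)
    · obtain ⟨z, rfl⟩ := t.mem_range_nerveMap_app x fun i => h_inter _ _ congr(($h).obj i)
      refine ⟨z, rfl, (b.nerveMap_app_injective Δ ?_)⟩
      rw [← h]
      exact Preorder.nerve_ext (X := D) fun i => (w (z.obj i)).symm
  · refine Set.eq_univ_of_forall fun s => ?_
    obtain hr | hb := h_chain _ (Monotone.isChain_range (Functor.monotone (X := Fin _) (Y := D) s))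
    · exact Or.inl (r.mem_range_nerveMap_app s fun i => hr ⟨i, rfl⟩)
    · exact Or.inr (b.mem_range_nerveMap_app s fun i => hb ⟨i, rfl⟩)

namespace LambdaP

lemma ext {k : ℕ} {p q : LambdaP k} (h₁ : (p.1.1 : ℕ) = q.1.1) (h₂ : (p.1.2 : ℕ) = q.1.2) :
    p = q :=
  Subtype.ext (Prod.ext (Fin.ext h₁) (Fin.ext h₂))

instance : Unique (LambdaP 0) where
  default := ⟨(0, 0), le_refl _, zero_le_one⟩
  uniq _ := ext (Fin.val_eq_zero _) (Fin.val_eq_zero _)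

lemma mem_range_lambdaIncl₁_iff {m : ℕ} {p : LambdaP (m+2)} :
    p ∈ Set.range (lambdaIncl₁ m) ↔ (p.1.2 : ℕ) ≤ m + 1 := by
  refine ⟨fun ⟨q, hq⟩ => hq ▸ Nat.lt_succ_iff.mp q.1.2.isLt, fun h => ?_⟩
  have hij : (p.1.1 : ℕ) ≤ p.1.2 := p.2.1
  exact ⟨⟨(⟨p.1.1, by omega⟩, ⟨p.1.2, by omega⟩), p.2⟩, ext rfl rfl⟩

lemma mem_range_lambdaIncl₂_iff {m : ℕ} {p : LambdaP (m+2)} :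
    p ∈ Set.range (lambdaIncl₂ m) ↔ m + 1 ≤ (p.1.1 : ℕ) := by
  refine ⟨fun ⟨q, hq⟩ => hq ▸ Nat.le_add_right _ _, fun h => ?_⟩
  have hij : (p.1.1 : ℕ) ≤ p.1.2 := p.2.1
  have hji : (p.1.2 : ℕ) ≤ p.1.1 + 1 := p.2.2
  have hj : (p.1.2 : ℕ) < m + 3 := p.1.2.isLt
  refine ⟨⟨(⟨p.1.1 - (m + 1), by omega⟩, ⟨p.1.2 - (m + 1), by omega⟩),
    Fin.mk_le_mk.mpr (by omega), show _ ≤ _ + 1 by omega⟩,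
    ext (show m + 1 + (p.1.1 - (m + 1)) = p.1.1 by omega)
      (show m + 1 + (p.1.2 - (m + 1)) = p.1.2 by omega)⟩

lemma subset_range_lambdaIncl₁_or_subset_range_lambdaIncl₂ {m : ℕ} {S : Set (LambdaP (m+2))}
    (hS : IsChain (· ≤ ·) S) :
    S ⊆ Set.range (lambdaIncl₁ m) ∨ S ⊆ Set.range (lambdaIncl₂ m) := by
  simp only [Set.subset_def, mem_range_lambdaIncl₁_iff, mem_range_lambdaIncl₂_iff]
  refine or_iff_not_imp_left.mpr fun h q hq => ?_
  push Not at h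
  obtain ⟨p, hp, hpj⟩ := h
  have hp_ji : (p.1.2 : ℕ) ≤ p.1.1 + 1 := p.2.2
  have hq_ji : (q.1.2 : ℕ) ≤ q.1.1 + 1 := q.2.2
  have hpj_lt : (p.1.2 : ℕ) < m + 3 := p.1.2.isLt
  rcases hS.total hp hq with hpq | hqp
  · have : (p.1.1 : ℕ) ≤ q.1.1 := hpq.1
    omega
  · have : (p.1.2 : ℕ) ≤ q.1.2 := hqp.2
    omega

lemma eq_lambdaVert₁_of_lambdaIncl₁_eq {m : ℕ} {x : LambdaP (m+1)} {y : LambdaP 1}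
    (h : lambdaIncl₁ m x = lambdaIncl₂ m y) : x = lambdaVert₁ m default := by
  have hi : (x.1.1 : ℕ) = m + 1 + y.1.1 := congr_arg (fun p : LambdaP (m+2) => (p.1.1 : ℕ)) h
  have hij : (x.1.1 : ℕ) ≤ x.1.2 := x.2.1
  have hj : (x.1.2 : ℕ) < m + 2 := x.1.2.isLt
  exact ext (show _ = m + 1 by omega) (show _ = m + 1 by omega)

end LambdaP

/-- For `n = m + 2 ≥ 2`, the commutative square of simplicial sets
`N(Λ^0) → N(Λ^{n−1})`, `N(Λ^0) → N(Λ^1)`, `N(Λ^{n−1}) → N(Λ^n)`, `N(Λ^1) → N(Λ^n)`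
— where the maps into `N(Λ^n)` are induced by the inert inclusions `[n−1] → [n]`
(hitting `{0,...,n−1}`) and `[1] → [n]` (hitting `{n−1,n}`), and both maps out of
`N(Λ^0) = Δ^0` pick out the vertex `(n−1,n−1)` — is a pushout square in the
category of simplicial sets. -/
theorem lambda_nerve_isPushout (m : ℕ) :
    IsPushout
      (nerveFunctor.map (vertFunctor₁ m))
      (nerveFunctor.map (vertFunctor₂ m))
      (nerveFunctor.map (inclFunctor₁ m))
      (nerveFunctor.map (inclFunctor₂ m)) :=
  nerve_isPushout_of_isChain (.ofSubsingleton (lambdaVert₁ m)) (.ofSubsingleton lambdaVert₂)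
    (.ofMapLEIff (lambdaIncl₁ m) fun _ _ => Iff.rfl)
    (.ofMapLEIff (lambdaIncl₂ m) fun _ _ =>
      and_congr Nat.add_le_add_iff_left Nat.add_le_add_iff_left)
    (fun _ => LambdaP.ext rfl rfl)
    (fun _ _ h => ⟨default, (LambdaP.eq_lambdaVert₁_of_lambdaIncl₁_eq h).symm⟩)
    (fun _ => LambdaP.subset_range_lambdaIncl₁_or_subset_range_lambdaIncl₂)
end

section
/- Let C be a category with pullbacks and let Span(C) be the category of isomorphism classes of spans in C. Then a span X ← f − A − g → Y represents an isomorphism in Span(C) if and only if both f : A → X and g : A → Y are isomorphisms in C. -/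
open CategoryTheory Limits

/-- A span from `X` to `Y` in `C`: a diagram `X ← A → Y`. -/
structure SpanC (C : Type*) [Category C] (X Y : C) where
  mid : C
  left : mid ⟶ X
  right : mid ⟶ Y

/-- Two spans are isomorphic if there is an isomorphism of their middle objects
commuting with the legs. -/
def SpanEquiv {C : Type*} [Category C] {X Y : C} (s t : SpanC C X Y) : Prop :=
  ∃ e : s.mid ≅ t.mid, e.hom ≫ t.left = s.left ∧ e.hom ≫ t.right = s.right

/-- The identity span `X ← X → X` with both legs the identity. -/
def idSpan {C : Type*} [Category C] (X : C) : SpanC C X X := ⟨X, 𝟙 X, 𝟙 X⟩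

/-- The composite of two spans, given by a pullback: `X ← A ×_Y B → Z`. -/
noncomputable def compSpan {C : Type*} [Category C] [HasPullbacks C] {X Y Z : C}
    (s : SpanC C X Y) (t : SpanC C Y Z) : SpanC C X Z :=
  ⟨pullback s.right t.left,
    pullback.fst s.right t.left ≫ s.left,
    pullback.snd s.right t.left ≫ t.right⟩

/-!
If `t` is inverse to `s`, both legs of the pullback square computing `s ⬝ t ≅ id` compose to
isomorphisms, so `s.left` and `t.right` are split epis, and symmetrically so are `t.left` and
`s.right`. A pullback of a split epi is a split epi, so the projection from the apex of `s ⬝ t`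
onto that of `s` is a split epi which becomes an iso after composing with `s.left`: it is mono as
well, hence an iso, and then so is `s.left`. Conversely, if both legs are isos the reversed span
is an inverse, because the kernel pair of a monomorphism is trivial.
-/

section SplitEpi

variable {C : Type*} [Category C]

lemma isSplitEpi_of_isIso_comp {X Y Z : C} (f : X ⟶ Y) (g : Y ⟶ Z) [IsIso (f ≫ g)] :
    IsSplitEpi g :=
  IsSplitEpi.mk' ⟨inv (f ≫ g) ≫ f, by simp⟩

lemma isIso_of_isIso_comp_of_isSplitEpi {X Y Z : C} (f : X ⟶ Y) (g : Y ⟶ Z) [IsIso (f ≫ g)]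
    [IsSplitEpi f] : IsIso g := by
  have : Mono f := mono_of_mono_fac (f := g) rfl
  have := isIso_of_mono_of_isSplitEpi f
  exact IsIso.of_isIso_comp_left f g

variable [HasPullbacks C] {X Y Z : C} (f : X ⟶ Z) (g : Y ⟶ Z)

instance isSplitEpi_pullback_fst_of_isSplitEpi [IsSplitEpi g] : IsSplitEpi (pullback.fst f g) :=
  IsSplitEpi.mk' ⟨pullback.lift (𝟙 X) (f ≫ section_ g) (by simp), pullback.lift_fst _ _ _⟩

instance isSplitEpi_pullback_snd_of_isSplitEpi [IsSplitEpi f] : IsSplitEpi (pullback.snd f g) :=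
  IsSplitEpi.mk' ⟨pullback.lift (g ≫ section_ f) (𝟙 Y) (by simp), pullback.lift_snd _ _ _⟩

end SplitEpi

section Span

variable {C : Type*} [Category C] {X Y : C}

abbrev SpanC.flip (s : SpanC C X Y) : SpanC C Y X := ⟨s.mid, s.right, s.left⟩

lemma spanEquiv_idSpan_iff (u : SpanC C X X) :
    SpanEquiv u (idSpan X) ↔ IsIso u.left ∧ u.left = u.right := by
  simp only [SpanEquiv, idSpan, Category.comp_id]
  constructor
  · rintro ⟨e, hl, hr⟩
    exact ⟨hl ▸ inferInstance, hl.symm.trans hr⟩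
  · rintro ⟨_, hlr⟩
    exact ⟨asIso u.left, rfl, hlr⟩

variable [HasPullbacks C] {s : SpanC C X Y} {t : SpanC C Y X}

lemma isIso_comp_fst_left_of_spanEquiv (h : SpanEquiv (compSpan s t) (idSpan X)) :
    IsIso (pullback.fst s.right t.left ≫ s.left) :=
  ((spanEquiv_idSpan_iff _).1 h).1

lemma isIso_comp_snd_right_of_spanEquiv (h : SpanEquiv (compSpan s t) (idSpan X)) :
    IsIso (pullback.snd s.right t.left ≫ t.right) := by
  obtain ⟨hiso, hlr⟩ := (spanEquiv_idSpan_iff _).1 h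
  have hlr : pullback.fst s.right t.left ≫ s.left = pullback.snd s.right t.left ≫ t.right := hlr
  exact hlr ▸ hiso

lemma isSplitEpi_left_of_spanEquiv (h : SpanEquiv (compSpan s t) (idSpan X)) :
    IsSplitEpi s.left :=
  have := isIso_comp_fst_left_of_spanEquiv h
  isSplitEpi_of_isIso_comp (pullback.fst s.right t.left) s.left

lemma isSplitEpi_right_of_spanEquiv (h : SpanEquiv (compSpan s t) (idSpan X)) :
    IsSplitEpi t.right :=
  have := isIso_comp_snd_right_of_spanEquiv h
  isSplitEpi_of_isIso_comp (pullback.snd s.right t.left) t.right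

lemma isIso_left_of_spanEquiv (h : SpanEquiv (compSpan s t) (idSpan X)) [IsSplitEpi t.left] :
    IsIso s.left :=
  have := isIso_comp_fst_left_of_spanEquiv h
  isIso_of_isIso_comp_of_isSplitEpi (pullback.fst s.right t.left) s.left

lemma isIso_right_of_spanEquiv (h : SpanEquiv (compSpan s t) (idSpan X)) [IsSplitEpi s.right] :
    IsIso t.right :=
  have := isIso_comp_snd_right_of_spanEquiv h
  isIso_of_isIso_comp_of_isSplitEpi (pullback.snd s.right t.left) t.right

lemma spanEquiv_compSpan_flip (s : SpanC C X Y) [IsIso s.left] [Mono s.right] :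
    SpanEquiv (compSpan s s.flip) (idSpan X) := by
  refine (spanEquiv_idSpan_iff _).2 ⟨?_, ?_⟩
  · change IsIso (pullback.fst s.right s.right ≫ s.left)
    infer_instance
  · change pullback.fst s.right s.right ≫ s.left = pullback.snd s.right s.right ≫ s.left
    rw [fst_eq_snd_of_mono_eq]

end Span

/-- A span `X ← A → Y` represents an isomorphism in `Span(C)` (i.e. admits an inverse
span up to isomorphism of spans) if and only if both of its legs are isomorphisms
in `C`. -/
theorem span_isIso_iff {C : Type*} [Category C] [HasPullbacks C] {X Y : C}
    (s : SpanC C X Y) :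
    (∃ t : SpanC C Y X,
        SpanEquiv (compSpan s t) (idSpan X) ∧ SpanEquiv (compSpan t s) (idSpan Y)) ↔
      (IsIso s.left ∧ IsIso s.right) := by
  constructor
  · rintro ⟨t, hst, hts⟩
    have := isSplitEpi_left_of_spanEquiv hts
    have := isSplitEpi_right_of_spanEquiv hst
    exact ⟨isIso_left_of_spanEquiv hst, isIso_right_of_spanEquiv hts⟩
  · rintro ⟨_, _⟩
    exact ⟨s.flip, spanEquiv_compSpan_flip s, spanEquiv_compSpan_flip s.flip⟩
end

section
/- Let C be a category with pullbacks and let f : X → A and g : X → B be morphisms. Form P = X ×_B X (the pullback of g along g), Q = X ×_A X (the pullback of f along f), and R = X ×_B X ×_A X (the limit of X → B ← X → A ← X). Let u : P → R be induced by (p₁, p₂, p₂) and v : Q → R be induced by (q₁, q₁, q₂). Then the canonical map X → P ×_R Q induced by the diagonals (x ↦ ((x,x),(x,x))) is an isomorphism. -/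
open CategoryTheory Limits

noncomputable section

variable {C : Type*} [Category C] [HasPullbacks C] {X A B : C}

/-- `P = X ×_B X`, the pullback of `g` along itself. -/
def P9 (g : X ⟶ B) : C := pullback g g

/-- `Q = X ×_A X`, the pullback of `f` along itself. -/
def Q9 (f : X ⟶ A) : C := pullback f f

/-- `R = X ×_B X ×_A X`, the wide pullback: triples `(x₁,x₂,x₃)` with
`g x₁ = g x₂` and `f x₂ = f x₃`, built as `P ×_X Q` along the second and first
projections. -/
def R9 (f : X ⟶ A) (g : X ⟶ B) : C :=
  pullback (pullback.snd g g) (pullback.fst f f)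

/-- `u : P → R` induced by `(p₁, p₂, p₂)`. -/
def u9 (f : X ⟶ A) (g : X ⟶ B) : P9 g ⟶ R9 f g :=
  pullback.lift (𝟙 _) (pullback.lift (pullback.snd g g) (pullback.snd g g) rfl)
    (by exact (Category.id_comp _).trans (pullback.lift_fst ..).symm)

/-- `v : Q → R` induced by `(q₁, q₁, q₂)`. -/
def v9 (f : X ⟶ A) (g : X ⟶ B) : Q9 f ⟶ R9 f g :=
  pullback.lift (pullback.lift (pullback.fst f f) (pullback.fst f f) rfl) (𝟙 _)
    (by exact (pullback.lift_snd ..).trans (Category.id_comp _).symm)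

/-- The diagonal `X → P = X ×_B X`. -/
def diagP9 (g : X ⟶ B) : X ⟶ P9 g := pullback.lift (𝟙 X) (𝟙 X) rfl

/-- The diagonal `X → Q = X ×_A X`. -/
def diagQ9 (f : X ⟶ A) : X ⟶ Q9 f := pullback.lift (𝟙 X) (𝟙 X) rfl

lemma diag_comm9 (f : X ⟶ A) (g : X ⟶ B) :
    diagP9 g ≫ u9 f g = diagQ9 f ≫ v9 f g := by
  have hu1 : u9 f g ≫ pullback.fst (pullback.snd g g) (pullback.fst f f) = 𝟙 (pullback g g) :=
    pullback.lift_fst ..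
  have hu2 : u9 f g ≫ pullback.snd (pullback.snd g g) (pullback.fst f f) =
      pullback.lift (pullback.snd g g) (pullback.snd g g) rfl := pullback.lift_snd ..
  have hv1 : v9 f g ≫ pullback.fst (pullback.snd g g) (pullback.fst f f) =
      pullback.lift (pullback.fst f f) (pullback.fst f f) rfl := pullback.lift_fst ..
  have hv2 : v9 f g ≫ pullback.snd (pullback.snd g g) (pullback.fst f f) = 𝟙 (pullback f f) :=
    pullback.lift_snd ..
  have hP1 : diagP9 g ≫ pullback.fst g g = 𝟙 X := pullback.lift_fst ..
  have hP2 : diagP9 g ≫ pullback.snd g g = 𝟙 X := pullback.lift_snd ..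
  have hQ1 : diagQ9 f ≫ pullback.fst f f = 𝟙 X := pullback.lift_fst ..
  have hQ2 : diagQ9 f ≫ pullback.snd f f = 𝟙 X := pullback.lift_snd ..
  have e : ∀ {Y Z W : C} (a : X ⟶ Y) (b : Y ⟶ Z) (c : Z ⟶ W) (d : Y ⟶ W),
      b ≫ c = d → (a ≫ b) ≫ c = a ≫ d :=
    fun a b c d h => (Category.assoc _ _ _).trans (congrArg _ h)
  apply pullback.hom_ext
  · refine (e _ _ _ _ hu1).trans ((Category.comp_id _).trans ((?_ : diagP9 g =
      diagQ9 f ≫ pullback.lift (pullback.fst f f) (pullback.fst f f) rfl).trans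
        (e _ _ _ _ hv1).symm))
    apply pullback.hom_ext
    · exact hP1.trans ((e _ _ _ _ (pullback.lift_fst ..)).trans hQ1).symm
    · exact hP2.trans ((e _ _ _ _ (pullback.lift_snd ..)).trans hQ1).symm
  · refine (e _ _ _ _ hu2).trans ((?_ : diagP9 g ≫
      pullback.lift (pullback.snd g g) (pullback.snd g g) rfl = diagQ9 f).trans
        ((Category.comp_id _).symm.trans (e _ _ _ _ hv2).symm))
    apply pullback.hom_ext
    · exact ((e _ _ _ _ (pullback.lift_fst ..)).trans hP2).trans hQ1.symm
    · exact ((e _ _ _ _ (pullback.lift_snd ..)).trans hP2).trans hQ2.symm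

/-! A generalized element of `P ×_R Q` is a pair `(p, q)` with `(p₁, p₂, p₂) = (q₁, q₁, q₂)`.
Hence `p₁ = p₂ = q₁ = q₂ =: x`, so `p` and `q` are both the diagonal at `x`, and
`(p, q) ↦ p₁` is inverse to `x ↦ ((x, x), (x, x))`. -/

section General

omit [HasPullbacks C]

lemma isIso_pullback_lift_of_retraction {P Q R : C} {u : P ⟶ R} {v : Q ⟶ R} [HasPullback u v]
    {s : X ⟶ P} {t : X ⟶ Q} (w : s ≫ u = t ≫ v) (r : P ⟶ X) (hr : s ≫ r = 𝟙 X)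
    (hfst : pullback.fst u v = pullback.fst u v ≫ r ≫ s)
    (hsnd : pullback.snd u v = pullback.fst u v ≫ r ≫ t) :
    IsIso (pullback.lift s t w) :=
  ⟨pullback.fst u v ≫ r, by simp [pullback.lift_fst_assoc, hr],
    by ext <;> simp [pullback.lift_fst, pullback.lift_snd, ← hfst, ← hsnd]⟩

variable {Y : C} (f : X ⟶ A) (g : X ⟶ B) [HasPullback f f] [HasPullback g g]

lemma pullback_lift_self_eq_comp_diagonal (h : Y ⟶ X) :
    pullback.lift h h rfl = h ≫ pullback.diagonal g := by
  ext <;> simp [pullback.lift_fst, pullback.lift_snd]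

lemma eq_comp_diagonal_of_fst_eq_snd (a : Y ⟶ pullback g g)
    (h : a ≫ pullback.fst g g = a ≫ pullback.snd g g) :
    a = a ≫ pullback.fst g g ≫ pullback.diagonal g := by
  ext <;> simp [h]

/-- `hp` and `hq` are the two components of `(p₁, p₂, p₂) = (q₁, q₁, q₂)`. -/
lemma eq_comp_diagonal_of_components_eq (p : Y ⟶ pullback g g) (q : Y ⟶ pullback f f)
    (hp : p = q ≫ pullback.lift (pullback.fst f f) (pullback.fst f f) rfl)
    (hq : q = p ≫ pullback.lift (pullback.snd g g) (pullback.snd g g) rfl) :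
    p = p ≫ pullback.fst g g ≫ pullback.diagonal g ∧
      q = p ≫ pullback.fst g g ≫ pullback.diagonal f := by
  have hp₁ : p ≫ pullback.fst g g = q ≫ pullback.fst f f := by
    simp [hp, pullback.lift_fst]
  have hp₂ : p ≫ pullback.snd g g = q ≫ pullback.fst f f := by
    simp [hp, pullback.lift_snd]
  refine ⟨eq_comp_diagonal_of_fst_eq_snd g p (hp₁.trans hp₂.symm), ?_⟩
  rw [hq, pullback_lift_self_eq_comp_diagonal, ← Category.assoc, ← Category.assoc, hp₁, hp₂]

end General

section Components

variable (f : X ⟶ A) (g : X ⟶ B)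

lemma u9_fst : u9 f g ≫ pullback.fst _ _ = 𝟙 (P9 g) := pullback.lift_fst ..

lemma u9_snd : u9 f g ≫ pullback.snd _ _ =
    pullback.lift (pullback.snd g g) (pullback.snd g g) rfl := pullback.lift_snd ..

lemma v9_fst : v9 f g ≫ pullback.fst _ _ =
    pullback.lift (pullback.fst f f) (pullback.fst f f) rfl := pullback.lift_fst ..

lemma v9_snd : v9 f g ≫ pullback.snd _ _ = 𝟙 (Q9 f) := pullback.lift_snd ..

/- `P9 g` and `pullback g g` agree only after unfolding, which `simp` and `rw` do not do:
hence `Category.comp_id` is applied by unification below. -/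
lemma pullback_fst_u9_v9_eq : pullback.fst (u9 f g) (v9 f g) =
    pullback.snd (u9 f g) (v9 f g) ≫ pullback.lift (pullback.fst f f) (pullback.fst f f) rfl := by
  have h := pullback.condition_assoc (f := u9 f g) (g := v9 f g) (pullback.fst _ _)
  rw [u9_fst, v9_fst] at h
  exact (Category.comp_id _).symm.trans h

lemma pullback_snd_u9_v9_eq : pullback.snd (u9 f g) (v9 f g) =
    pullback.fst (u9 f g) (v9 f g) ≫ pullback.lift (pullback.snd g g) (pullback.snd g g) rfl := by
  have h := pullback.condition_assoc (f := u9 f g) (g := v9 f g) (pullback.snd _ _)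
  rw [u9_snd, v9_snd] at h
  exact (Category.comp_id _).symm.trans h.symm

end Components

/-- The canonical comparison map `X → P ×_R Q` induced by the diagonals
`x ↦ ((x,x),(x,x))` is an isomorphism. -/
theorem canonical_map_isIso (f : X ⟶ A) (g : X ⟶ B) :
    IsIso (pullback.lift (diagP9 g) (diagQ9 f) (diag_comm9 f g) :
      X ⟶ pullback (u9 f g) (v9 f g)) := by
  obtain ⟨hfst, hsnd⟩ := eq_comp_diagonal_of_components_eq f g _ _
    (pullback_fst_u9_v9_eq f g) (pullback_snd_u9_v9_eq f g)
  exact isIso_pullback_lift_of_retraction (diag_comm9 f g) (pullback.fst g g)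
    (pullback.lift_fst _ _ _) hfst hsnd

end
end

section
/- Let φ : [m] → [n] be a monotone map, let c ∈ [n], and let x₁ ≤ x₂ in [m] satisfy φ(x₁) ≤ c ≤ φ(x₂). Consider the set S of pairs (a,b) with x₁ ≤ a ≤ b ≤ x₂, b − a ≤ 1, φ(a) ≤ c, and c ≤ φ(b), partially ordered by (a,b) ≤ (a',b') iff a ≤ a' and b' ≤ b. Then S is nonempty, and S is connected: any two elements of S are joined by a zigzag of comparable pairs within S. -/
/-- The set `S` of pairs `(a,b)` with `x₁ ≤ a ≤ b ≤ x₂`, `b − a ≤ 1`, `φ(a) ≤ c`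
and `c ≤ φ(b)`. -/
def S16 {m n : ℕ} (φ : Fin (m+1) → Fin (n+1)) (c : Fin (n+1)) (x₁ x₂ : Fin (m+1)) :
    Set (Fin (m+1) × Fin (m+1)) :=
  {p | x₁ ≤ p.1 ∧ p.1 ≤ p.2 ∧ p.2 ≤ x₂ ∧ (p.2 : ℕ) ≤ (p.1 : ℕ) + 1 ∧ φ p.1 ≤ c ∧ c ≤ φ p.2}

/-- The partial order on pairs: `(a,b) ≤ (a',b')` iff `a ≤ a'` and `b' ≤ b`. -/
def le16 {m : ℕ} (p q : Fin (m+1) × Fin (m+1)) : Prop :=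
  p.1 ≤ q.1 ∧ q.2 ≤ p.2

/-!
Nonemptiness is a discrete intermediate value theorem: if `a` is the largest point of
`[x₁, x₂]` with `φ a ≤ c`, then `(a, a)` or `(a, a + 1)` lies in `S`.

For connectedness, let `p, q ∈ S` with `p.1 < q.1` and put `a = p.1 + 1 ≤ q.1`. Monotonicity of `φ`
gives `c ≤ φ p.2 ≤ φ a ≤ φ q.1 ≤ c`, so `p ≥ (p.1, a) ≤ (a, a)` is a zigzag in `S` that moves the
first coordinate one step towards `q.1`. Once the first coordinates agree, the two pairs are
comparable.
-/

def S16Adj {m n : ℕ} (φ : Fin (m+1) → Fin (n+1)) (c : Fin (n+1)) (x₁ x₂ : Fin (m+1))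
    (p q : Fin (m+1) × Fin (m+1)) : Prop :=
  p ∈ S16 φ c x₁ x₂ ∧ q ∈ S16 φ c x₁ x₂ ∧ (le16 p q ∨ le16 q p)

section

variable {m n : ℕ} {φ : Fin (m+1) → Fin (n+1)} {c : Fin (n+1)} {x₁ x₂ : Fin (m+1)}

theorem S16_nonempty (hx : x₁ ≤ x₂) (h₁ : φ x₁ ≤ c) (h₂ : c ≤ φ x₂) :
    (S16 φ c x₁ x₂).Nonempty := by
  obtain ⟨a, ⟨hx₁a, hax₂, hac⟩, hmax⟩ :=
    (Set.toFinite {a | x₁ ≤ a ∧ a ≤ x₂ ∧ φ a ≤ c}).exists_maximal ⟨x₁, le_rfl, hx, h₁⟩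
  rcases hax₂.eq_or_lt with rfl | hlt
  · exact ⟨(a, a), hx₁a, le_rfl, le_rfl, Nat.le_succ _, hac, h₂⟩
  · have hlt' : (a : ℕ) < x₂ := hlt
    let b : Fin (m+1) := ⟨a + 1, by omega⟩
    have hab : a ≤ b := Fin.le_def.mpr (by simp [b])
    have hbx₂ : b ≤ x₂ := Fin.le_def.mpr (by simp [b]; omega)
    have hcb : c ≤ φ b := by
      by_contra! hbc
      have : b ≤ a := hmax ⟨hx₁a.trans hab, hbx₂, hbc.le⟩ hab
      exact absurd (Fin.le_def.mp this) (by simp [b])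
    exact ⟨(a, b), hx₁a, hab, hbx₂, by simp [b], hac, hcb⟩

theorem le16_or_le16_of_fst_eq {p q : Fin (m+1) × Fin (m+1)} (h : p.1 = q.1) :
    le16 p q ∨ le16 q p :=
  (le_total q.2 p.2).imp (fun h₂ => ⟨h.le, h₂⟩) (fun h₂ => ⟨h.ge, h₂⟩)

instance : Std.Symm (S16Adj φ c x₁ x₂) :=
  ⟨fun _ _ h => ⟨h.2.1, h.1, h.2.2.symm⟩⟩

theorem exists_reflTransGen_S16Adj_diag_of_fst_lt (hφ : Monotone φ)
    {p q : Fin (m+1) × Fin (m+1)} (hp : p ∈ S16 φ c x₁ x₂) (hq : q ∈ S16 φ c x₁ x₂)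
    (hlt : p.1 < q.1) :
    ∃ a, p.1 < a ∧ a ≤ q.1 ∧ (a, a) ∈ S16 φ c x₁ x₂ ∧
      Relation.ReflTransGen (S16Adj φ c x₁ x₂) p (a, a) := by
  obtain ⟨hx₁p, -, -, hp₂, hpc, hcp⟩ := id hp
  obtain ⟨-, hq₁₂, hqx₂, -, hqc, -⟩ := hq
  have hlt' : (p.1 : ℕ) < q.1 := hlt
  let a : Fin (m+1) := ⟨p.1 + 1, by omega⟩
  have hpa : p.1 < a := Fin.lt_def.mpr (by simp [a])
  have haq : a ≤ q.1 := Fin.le_def.mpr (by simp [a]; omega)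
  have hp₂a : p.2 ≤ a := Fin.le_def.mpr (by simp [a]; omega)
  have hax₂ : a ≤ x₂ := haq.trans (hq₁₂.trans hqx₂)
  have hca : c ≤ φ a := hcp.trans (hφ hp₂a)
  have hedge : (p.1, a) ∈ S16 φ c x₁ x₂ := ⟨hx₁p, hpa.le, hax₂, by simp [a], hpc, hca⟩
  have hdiag : (a, a) ∈ S16 φ c x₁ x₂ :=
    ⟨hx₁p.trans hpa.le, le_rfl, hax₂, Nat.le_succ _, (hφ haq).trans hqc, hca⟩
  have hp_edge : S16Adj φ c x₁ x₂ p (p.1, a) := ⟨hp, hedge, .inr ⟨le_rfl, hp₂a⟩⟩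
  have hedge_diag : S16Adj φ c x₁ x₂ (p.1, a) (a, a) := ⟨hedge, hdiag, .inl ⟨hpa.le, le_rfl⟩⟩
  exact ⟨a, hpa, haq, hdiag, .head hp_edge (.single hedge_diag)⟩

theorem reflTransGen_S16Adj_of_fst_le (hφ : Monotone φ) {p q : Fin (m+1) × Fin (m+1)}
    (hp : p ∈ S16 φ c x₁ x₂) (hq : q ∈ S16 φ c x₁ x₂) (h : p.1 ≤ q.1) :
    Relation.ReflTransGen (S16Adj φ c x₁ x₂) p q := by
  rcases h.eq_or_lt with h | h
  · exact .single ⟨hp, hq, le16_or_le16_of_fst_eq h⟩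
  · obtain ⟨a, hpa, haq, hdiag, hpath⟩ := exists_reflTransGen_S16Adj_diag_of_fst_lt hφ hp hq h
    exact hpath.trans (reflTransGen_S16Adj_of_fst_le hφ hdiag hq haq)
termination_by (q.1 : ℕ) - p.1
decreasing_by
  have : (p.1 : ℕ) < a := hpa
  have : (a : ℕ) ≤ q.1 := haq
  omega

theorem reflTransGen_S16Adj (hφ : Monotone φ) {p q : Fin (m+1) × Fin (m+1)}
    (hp : p ∈ S16 φ c x₁ x₂) (hq : q ∈ S16 φ c x₁ x₂) :
    Relation.ReflTransGen (S16Adj φ c x₁ x₂) p q := by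
  rcases le_total p.1 q.1 with h | h
  · exact reflTransGen_S16Adj_of_fst_le hφ hp hq h
  · exact Std.Symm.symm _ _ (reflTransGen_S16Adj_of_fst_le hφ hq hp h)

end

/-- For a monotone `φ : [m] → [n]`, `c ∈ [n]` and `x₁ ≤ x₂` with `φ(x₁) ≤ c ≤ φ(x₂)`,
the set `S` is nonempty and connected: any two elements are joined by a zigzag of
comparable pairs within `S`. -/
theorem S16_nonempty_and_connected {m n : ℕ} (φ : Fin (m+1) → Fin (n+1))
    (hφ : Monotone φ) (c : Fin (n+1)) (x₁ x₂ : Fin (m+1)) (hx : x₁ ≤ x₂)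
    (h₁ : φ x₁ ≤ c) (h₂ : c ≤ φ x₂) :
    (S16 φ c x₁ x₂).Nonempty ∧
    ∀ p ∈ S16 φ c x₁ x₂, ∀ q ∈ S16 φ c x₁ x₂,
      Relation.ReflTransGen
        (fun a b => a ∈ S16 φ c x₁ x₂ ∧ b ∈ S16 φ c x₁ x₂ ∧ (le16 a b ∨ le16 b a)) p q :=
  ⟨S16_nonempty hx h₁ h₂, fun _ hp _ hq => reflTransGen_S16Adj hφ hp hq⟩
end

section
/- Let π : E → C be a Grothendieck fibration, and let j : C₀ → C be a fully faithful functor admitting a right adjoint r : C → C₀ with counit ε : j r → id_C. Let E₀ be the (strict) pullback of π along j, with induced fully faithful functor J : E₀ → E. Then J admits a right adjoint R : E → E₀ such that for every object X ∈ E the counit J R(X) → X is a π-cartesian morphism lying over ε_{π(X)} : j r π(X) → π(X). -/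
open CategoryTheory

/-- The (strict) pullback of a functor `π : E ⥤ C` along `j : C₀ ⥤ C`: pairs
`(c₀, X)` with `π(X) = j(c₀)`, viewed as a (full sub)category of `E` via the
induced category construction.  (Since `j` is fully faithful this induced
category is isomorphic to the strict pullback.) -/
def FibPullback {C₀ C E : Type*} [Category C₀] [Category C] [Category E]
    (π : E ⥤ C) (j : C₀ ⥤ C) : Type _ :=
  InducedCategory E (fun p : {p : C₀ × E // π.obj p.2 = j.obj p.1} => p.1.2)

instance {C₀ C E : Type*} [Category C₀] [Category C] [Category E]
    (π : E ⥤ C) (j : C₀ ⥤ C) : Category (FibPullback π j) :=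
  InducedCategory.instCategory

/-- The inclusion `J : E₀ ⥤ E` of the pullback. -/
def FibPullback.incl {C₀ C E : Type*} [Category C₀] [Category C] [Category E]
    (π : E ⥤ C) (j : C₀ ⥤ C) : FibPullback π j ⥤ E :=
  inducedFunctor _

/-!
The right adjoint sends `X` to the domain of a cartesian lift of `ε_{π X}`, over the point
`r (π X)` of `C₀`. Because `j` is full and `j ⊣ r`, composing with `ε_c` is a bijection
`(j a ⟶ j (r c)) ≃ (j a ⟶ c)`: every `u : j a ⟶ c` is `j v ≫ ε_c` for its transpose `v`.
A strongly cartesian lift of `ε_c` transports this bijection to morphisms out of any object of `E`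
lying over some `j a`, which is the universal property of the counit of `J ⊣ R`.
-/

open Functor

namespace CategoryTheory

theorem Functor.IsStronglyCartesian.bijective_comp {𝒮 𝒳 : Type*} [Category 𝒮] [Category 𝒳]
    (p : 𝒳 ⥤ 𝒮) {R S : 𝒮} {a b : 𝒳} (f : R ⟶ S) (φ : a ⟶ b) [p.IsStronglyCartesian f φ]
    (a' : 𝒳) (hf : Function.Bijective fun g : p.obj a' ⟶ R => g ≫ f) :
    Function.Bijective fun ψ : a' ⟶ a => ψ ≫ φ := by
  have ha := IsHomLift.domain_eq p f φ
  have hb := IsHomLift.codomain_eq p f φ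
  have hφ : eqToHom ha ≫ f = p.map φ ≫ eqToHom hb := by simp [IsHomLift.fac' p f φ]
  constructor
  · intro ψ ψ' (h : ψ ≫ φ = ψ' ≫ φ)
    have hbase : (p.map ψ' ≫ eqToHom ha) ≫ f = (p.map ψ ≫ eqToHom ha) ≫ f := by
      simp only [Category.assoc, hφ, ← p.map_comp_assoc, h]
    have : p.IsHomLift (p.map ψ ≫ eqToHom ha) ψ' := by rw [← hf.1 hbase]; infer_instance
    exact IsStronglyCartesian.ext p f φ (p.map ψ ≫ eqToHom ha) h
  · intro φ'
    obtain ⟨g, hg⟩ := hf.2 (p.map φ' ≫ eqToHom hb)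
    exact ⟨IsStronglyCartesian.map p f φ hg.symm φ', IsStronglyCartesian.fac p f φ _ _⟩

theorem Adjunction.bijective_comp_counit {C₀ C : Type*} [Category C₀] [Category C]
    {j : C₀ ⥤ C} {r : C ⥤ C₀} (adj : j ⊣ r) [j.Full] (a : C₀) (c : C) :
    Function.Bijective fun g : j.obj a ⟶ j.obj (r.obj c) => g ≫ adj.counit.app c := by
  constructor
  · intro g₁ g₂ h
    obtain ⟨v₁, rfl⟩ := j.map_surjective g₁
    obtain ⟨v₂, rfl⟩ := j.map_surjective g₂
    exact congrArg j.map <|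
      (adj.homEquiv a c).symm.injective (by simpa only [Adjunction.homEquiv_counit] using h)
  · intro u
    exact ⟨j.map (adj.homEquiv a c u),
      (adj.homEquiv_counit (g := adj.homEquiv a c u)).symm.trans (Equiv.symm_apply_apply _ _)⟩

end CategoryTheory

namespace FibPullback

variable {C₀ C E : Type*} [Category C₀] [Category C] [Category E] (π : E ⥤ C)
  {j : C₀ ⥤ C} {r : C ⥤ C₀} (adj : j ⊣ r)

noncomputable def coreflectionObj [π.IsPreFibered] (X : E) : FibPullback π j :=
  (⟨⟨r.obj (π.obj X), IsPreFibered.pullbackObj rfl (adj.counit.app (π.obj X))⟩,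
    IsPreFibered.pullbackObj_proj (rfl : π.obj X = π.obj X) _⟩ :
    {p : C₀ × E // π.obj p.2 = j.obj p.1})

noncomputable def coreflectionMap [π.IsPreFibered] (X : E) :
    (incl π j).obj (coreflectionObj π adj X) ⟶ X :=
  IsPreFibered.pullbackMap (rfl : π.obj X = π.obj X) (adj.counit.app (π.obj X))

variable [π.IsFibered]

instance isStronglyCartesian_coreflectionMap (X : E) :
    π.IsStronglyCartesian (adj.counit.app (π.obj X)) (coreflectionMap π adj X) :=
  have : π.IsCartesian (adj.counit.app (π.obj X)) (coreflectionMap π adj X) :=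
    IsPreFibered.pullbackMap.IsCartesian _ _
  inferInstance

variable [j.Full]

theorem bijective_comp_coreflectionMap (A : FibPullback π j) (X : E) :
    Function.Bijective fun w : A ⟶ coreflectionObj π adj X =>
      (incl π j).map w ≫ coreflectionMap π adj X := by
  have hbase : Function.Bijective fun g : π.obj A.1.2 ⟶ j.obj (r.obj (π.obj X)) =>
      g ≫ adj.counit.app (π.obj X) := by
    rw [A.2]
    exact adj.bijective_comp_counit _ _
  exact (IsStronglyCartesian.bijective_comp π _ _ _ hbase).comp InducedCategory.homEquiv.bijective

noncomputable def coreflectionHomEquiv (A : FibPullback π j) (X : E) :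
    ((incl π j).obj A ⟶ X) ≃ (A ⟶ coreflectionObj π adj X) :=
  (Equiv.ofBijective _ (bijective_comp_coreflectionMap π adj A X)).symm

theorem coreflectionHomEquiv_symm_apply (A : FibPullback π j) (X : E)
    (w : A ⟶ coreflectionObj π adj X) :
    (coreflectionHomEquiv π adj A X).symm w = (incl π j).map w ≫ coreflectionMap π adj X :=
  rfl

theorem coreflectionHomEquiv_naturality (A' A : FibPullback π j) (X : E) (f : A' ⟶ A)
    (g : (incl π j).obj A ⟶ X) :
    coreflectionHomEquiv π adj A' X ((incl π j).map f ≫ g) =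
      f ≫ coreflectionHomEquiv π adj A X g := by
  rw [← Equiv.eq_symm_apply, coreflectionHomEquiv_symm_apply, Functor.map_comp,
    Category.assoc, ← coreflectionHomEquiv_symm_apply, Equiv.symm_apply_apply]

noncomputable def rightAdjoint : E ⥤ FibPullback π j :=
  Adjunction.rightAdjointOfEquiv _ (coreflectionHomEquiv_naturality π adj)

noncomputable def adjunction : incl π j ⊣ rightAdjoint π adj :=
  Adjunction.adjunctionOfEquivRight _ (coreflectionHomEquiv_naturality π adj)

theorem adjunction_counit_app (X : E) :
    (adjunction π adj).counit.app X = coreflectionMap π adj X := by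
  rw [adjunction, Adjunction.adjunctionOfEquivRight_counit_app, coreflectionHomEquiv_symm_apply]
  exact Category.id_comp _

end FibPullback

theorem fibPullback_hasRightAdjoint_general {C₀ C E : Type*}
    [Category C₀] [Category C] [Category E]
    (π : E ⥤ C) [π.IsFibered] (j : C₀ ⥤ C) [j.Full]
    (r : C ⥤ C₀) (adj : j ⊣ r) :
    ∃ (R : E ⥤ FibPullback π j) (adj' : FibPullback.incl π j ⊣ R),
      ∀ X : E,
        π.IsStronglyCartesian (adj.counit.app (π.obj X)) (adj'.counit.app X) := by
  refine ⟨FibPullback.rightAdjoint π adj, FibPullback.adjunction π adj, fun X => ?_⟩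
  rw [FibPullback.adjunction_counit_app]
  exact FibPullback.isStronglyCartesian_coreflectionMap π adj X

/-- Let `π : E ⥤ C` be a Grothendieck fibration and `j : C₀ ⥤ C` a fully faithful
functor with right adjoint `r`, with counit `ε : j ⋙ r ⟶ 𝟭 C`.  Then the inclusion
`J : E₀ ⥤ E` of the pullback of `π` along `j` admits a right adjoint `R` such that
for every `X ∈ E` the counit `J R X ⟶ X` is a `π`-cartesian morphism lying over
`ε_{π X} : j r π X ⟶ π X`. -/
theorem fibPullback_hasRightAdjoint {C₀ C E : Type*}
    [Category C₀] [Category C] [Category E]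
    (π : E ⥤ C) [π.IsFibered] (j : C₀ ⥤ C) [j.Full] [j.Faithful]
    (r : C ⥤ C₀) (adj : j ⊣ r) :
    ∃ (R : E ⥤ FibPullback π j) (adj' : FibPullback.incl π j ⊣ R),
      ∀ X : E,
        π.IsStronglyCartesian (adj.counit.app (π.obj X)) (adj'.counit.app X) :=
  fibPullback_hasRightAdjoint_general π j r adj
end
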